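/- arXiv:math/0201209 — 3 statements merged into one kernel-verified Lean document; each statement's English description precedes it below -/
import Mathlib

section
/- Let G ⊆ ℝ̄ⁿ be a domain whose boundary ∂G (in ℝ̄ⁿ) contains at least two points. Then for all x, y ∈ G, ρ_G(x,y) ≤ (arcosh 3 / log 3) · δ_G(x,y). -/
open OnePoint

noncomputable section

/-- Inverse hyperbolic cosine: arcosh t = log (t + √(t² − 1)). -/
def arcosh (t : ℝ) : ℝ := Real.log (t + Real.sqrt (t ^ 2 - 1))

/-- Euclidean n-space. -/
abbrev En (n : ℕ) : Type := EuclideanSpace ℝ (Fin n)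

/-- The chordal (spherical) metric on the one-point compactification ℝ̄ⁿ of ℝⁿ. -/
def chordal {n : ℕ} : OnePoint (En n) → OnePoint (En n) → ℝ
  | ∞, ∞ => 0
  | ∞, (y : En n) => 1 / Real.sqrt (1 + ‖y‖ ^ 2)
  | (x : En n), ∞ => 1 / Real.sqrt (1 + ‖x‖ ^ 2)
  | (x : En n), (y : En n) => ‖x - y‖ / (Real.sqrt (1 + ‖x‖ ^ 2) * Real.sqrt (1 + ‖y‖ ^ 2))

/-- The cross-ratio |a,b,c,d| = q(a,c)q(b,d)/(q(a,b)q(c,d)) in the chordal metric. -/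
def crossRatio {n : ℕ} (a b c d : OnePoint (En n)) : ℝ :=
  chordal a c * chordal b d / (chordal a b * chordal c d)

/-- The generalized hyperbolic metric ρ_G(x,y) = sup_{a,b ∈ ∂G} arcosh(1 + |a,x,b,y||a,y,b,x|/2). -/
def rho {n : ℕ} (G : Set (OnePoint (En n))) (x y : OnePoint (En n)) : ℝ :=
  sSup {r : ℝ | ∃ a ∈ frontier G, ∃ b ∈ frontier G,
    r = arcosh (1 + crossRatio a x b y * crossRatio a y b x / 2)}

/-- Seittenranta's metric δ_G(x,y) = sup_{a,b ∈ ∂G} log(1 + |a,x,b,y|). -/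
def seittenranta {n : ℕ} (G : Set (OnePoint (En n))) (x y : OnePoint (En n)) : ℝ :=
  sSup {r : ℝ | ∃ a ∈ frontier G, ∃ b ∈ frontier G,
    r = Real.log (1 + crossRatio a x b y)}

/-- The j-metric j_G(x,y) = log(1 + |x−y|/min(d(x,∂G), d(y,∂G))). -/
def jMetric {n : ℕ} (G : Set (En n)) (x y : En n) : ℝ :=
  Real.log (1 + ‖x - y‖ / min (Metric.infDist x (frontier G)) (Metric.infDist y (frontier G)))

/-- The metric δ_G^p(x,y) = sup_{a,b ∈ ∂G} log(1 + (|x,a,y,b|^p + |x,b,y,a|^p)^(1/p)). -/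
def deltaP {n : ℕ} (p : ℝ) (G : Set (OnePoint (En n))) (x y : OnePoint (En n)) : ℝ :=
  sSup {r : ℝ | ∃ a ∈ frontier G, ∃ b ∈ frontier G,
    r = Real.log (1 + (crossRatio x a y b ^ p + crossRatio x b y a ^ p) ^ (1 / p))}

/-- The metric j_G^p(x,y) = sup_{a ∈ ∂G} log(1 + (|x−y|^p/|x−a|^p + |x−y|^p/|y−a|^p)^(1/p)). -/
def jP {n : ℕ} (p : ℝ) (G : Set (En n)) (x y : En n) : ℝ :=
  sSup {r : ℝ | ∃ a ∈ frontier G,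
    r = Real.log (1 + (‖x - y‖ ^ p / ‖x - a‖ ^ p + ‖x - y‖ ^ p / ‖y - a‖ ^ p) ^ (1 / p))}

/-!
Write `c = |a,x,b,y|` and `c' = |a,y,b,x|`. The chordal metric is the Euclidean distance on the
sphere of inverse stereographic projection, so Ptolemy's inequality gives `c c' ≤ c + c'`; with
`m = max c c'` this means `c c' / 2 ≤ min (m² / 2) m`. For `K = arcosh 3 / log 3` the claim then
reduces to `arcosh (1 + m² / 2) ≤ K log (1 + m)` on `[0, 2]` and `arcosh (1 + m) ≤ K log (1 + m)`
on `[2, ∞)`, both with equality at `m = 2` and proved by a sign analysis of the derivative.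
When the supremum defining `δ_G` is unbounded, Ptolemy also gives `c ≤ 1 + c c'`, so the one
defining `ρ_G` is unbounded too and both sides are `0` by the `sSup` convention.
-/

section Chordal

variable {E : Type*} [NormedAddCommGroup E] [InnerProductSpace ℝ E]

/-- Inverse stereographic projection onto the sphere with diameter from `(0, 0)` to `(0, 1)` in
`E × ℝ`; `chordal` is the Euclidean distance between the images. -/
def inverseStereographic : OnePoint E → WithLp 2 (E × ℝ)
  | ∞ => WithLp.toLp 2 (0, 1)
  | (x : E) => WithLp.toLp 2 ((1 + ‖x‖ ^ 2)⁻¹ • x, ‖x‖ ^ 2 / (1 + ‖x‖ ^ 2))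

lemma dist_inverseStereographic_coe_coe (x y : E) :
    dist (inverseStereographic (x : OnePoint E)) (inverseStereographic (y : OnePoint E)) =
      ‖x - y‖ / (√(1 + ‖x‖ ^ 2) * √(1 + ‖y‖ ^ 2)) := by
  have hX : 0 < 1 + ‖x‖ ^ 2 := by positivity
  have hY : 0 < 1 + ‖y‖ ^ 2 := by positivity
  rw [← Real.sqrt_mul hX.le, ← Real.sqrt_sq (norm_nonneg (x - y)),
    ← Real.sqrt_div' _ (by positivity), dist_eq_norm, WithLp.prod_norm_eq_of_L2]
  congr 1
  simp only [inverseStereographic, WithLp.sub_fst, WithLp.sub_snd, WithLp.toLp_fst,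
    WithLp.toLp_snd, Real.norm_eq_abs, sq_abs]
  rw [norm_sub_sq_real, norm_sub_sq_real, norm_smul, norm_smul, inner_smul_left,
    inner_smul_right]
  simp only [Real.norm_eq_abs, abs_inv, abs_of_pos hX, abs_of_pos hY, conj_trivial]
  field_simp
  ring

lemma dist_inverseStereographic_coe_infty (x : E) :
    dist (inverseStereographic (x : OnePoint E)) (inverseStereographic ∞) =
      1 / √(1 + ‖x‖ ^ 2) := by
  have hX : 0 < 1 + ‖x‖ ^ 2 := by positivity
  rw [one_div, ← Real.sqrt_inv, dist_eq_norm, WithLp.prod_norm_eq_of_L2]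
  congr 1
  simp only [inverseStereographic, WithLp.sub_fst, WithLp.sub_snd, WithLp.toLp_fst,
    WithLp.toLp_snd, Real.norm_eq_abs, sq_abs, sub_zero, norm_smul, abs_inv, abs_of_pos hX]
  field_simp
  ring

end Chordal

lemma div_mul_div_le_div_add_div {N D₁ D₂ : ℝ} (hN : 0 ≤ N) (hD₁ : 0 ≤ D₁) (hD₂ : 0 ≤ D₂)
    (h : N ≤ D₁ + D₂) : N / D₁ * (N / D₂) ≤ N / D₁ + N / D₂ := by
  rcases hD₁.eq_or_lt with rfl | hD₁
  · simp only [div_zero, zero_mul, zero_add]; positivity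
  rcases hD₂.eq_or_lt with rfl | hD₂
  · simp only [div_zero, mul_zero, add_zero]; positivity
  rw [div_mul_div_comm, div_add_div _ _ hD₁.ne' hD₂.ne',
    div_le_div_iff_of_pos_right (by positivity)]
  nlinarith

lemma div_le_one_add_div_mul_div {N D₁ D₂ : ℝ} (hN : 0 ≤ N) (hD₁ : 0 ≤ D₁) (hD₂ : 0 ≤ D₂)
    (h : N ≤ D₁ + D₂) (h' : D₂ ≤ N + D₁) : N / D₁ ≤ 1 + N / D₁ * (N / D₂) := by
  rcases hD₁.eq_or_lt with rfl | hD₁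
  · simp only [div_zero, zero_mul]; positivity
  rcases hD₂.eq_or_lt with rfl | hD₂
  · simp only [div_zero, mul_zero, add_zero]
    exact div_le_one_of_le₀ (by linarith) hD₁.le
  have key : N * D₂ ≤ D₁ * D₂ + N * N := by
    rcases le_total N D₁ with hND | hND <;> nlinarith
  rw [div_mul_div_comm, one_add_div (by positivity), div_le_div_iff₀ hD₁ (by positivity)]
  nlinarith

section CrossRatio

variable {n : ℕ}

lemma chordal_eq_dist (p q : OnePoint (En n)) :
    chordal p q = dist (inverseStereographic p) (inverseStereographic q) := by
  cases p <;> cases q <;>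
    simp only [chordal, dist_self, dist_inverseStereographic_coe_coe,
      dist_inverseStereographic_coe_infty, dist_comm (inverseStereographic ∞)]

lemma chordal_comm (p q : OnePoint (En n)) : chordal p q = chordal q p := by
  simp only [chordal_eq_dist, dist_comm]

lemma chordal_nonneg (p q : OnePoint (En n)) : 0 ≤ chordal p q :=
  chordal_eq_dist p q ▸ dist_nonneg

lemma chordal_ptolemy (a b c d : OnePoint (En n)) :
    chordal a c * chordal b d ≤ chordal a b * chordal c d + chordal b c * chordal a d := by
  simp only [chordal_eq_dist]
  exact EuclideanGeometry.mul_dist_le_mul_dist_add_mul_dist _ _ _ _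

lemma crossRatio_nonneg (a b c d : OnePoint (En n)) : 0 ≤ crossRatio a b c d := by
  simp only [crossRatio, chordal_eq_dist]
  positivity

lemma crossRatio_swap (a b x y : OnePoint (En n)) :
    crossRatio b x a y = crossRatio a y b x := by
  simp only [crossRatio, chordal_comm b a, chordal_comm x y, mul_comm (chordal b x)]

-- No distinctness of the four points is needed: a vanishing denominator makes a cross-ratio `0`.
lemma crossRatio_mul_le_add (a b x y : OnePoint (En n)) :
    crossRatio a x b y * crossRatio a y b x ≤ crossRatio a x b y + crossRatio a y b x := by
  have hptolemy := chordal_ptolemy a x b y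
  rw [chordal_comm x b, mul_comm (chordal b x)] at hptolemy
  simp only [crossRatio, chordal_comm y x]
  exact div_mul_div_le_div_add_div (mul_nonneg (chordal_nonneg _ _) (chordal_nonneg _ _))
    (mul_nonneg (chordal_nonneg _ _) (chordal_nonneg _ _))
    (mul_nonneg (chordal_nonneg _ _) (chordal_nonneg _ _)) hptolemy

lemma crossRatio_le_one_add_mul (a b x y : OnePoint (En n)) :
    crossRatio a x b y ≤ 1 + crossRatio a x b y * crossRatio a y b x := by
  have hptolemy := chordal_ptolemy a x b y
  rw [chordal_comm x b, mul_comm (chordal b x)] at hptolemy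
  have hptolemy' := chordal_ptolemy a b y x
  rw [chordal_comm y x, mul_comm (chordal b y)] at hptolemy'
  simp only [crossRatio, chordal_comm y x]
  exact div_le_one_add_div_mul_div (mul_nonneg (chordal_nonneg _ _) (chordal_nonneg _ _))
    (mul_nonneg (chordal_nonneg _ _) (chordal_nonneg _ _))
    (mul_nonneg (chordal_nonneg _ _) (chordal_nonneg _ _)) hptolemy (by linarith)

end CrossRatio

lemma nonneg_of_deriv_neg_imp_nonpos {f f' : ℝ → ℝ} {a b x : ℝ}
    (hf : ContinuousOn f (Set.Icc a b)) (hf' : ∀ t ∈ Set.Ioo a b, HasDerivAt f (f' t) t)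
    (hsign : ∀ s ∈ Set.Ioo a b, ∀ t ∈ Set.Ioo a b, s ≤ t → f' s < 0 → f' t ≤ 0)
    (ha : 0 ≤ f a) (hb : 0 ≤ f b) (hx : x ∈ Set.Icc a b) : 0 ≤ f x := by
  by_contra! hfx
  have hax : a < x := hx.1.lt_of_ne (by rintro rfl; linarith)
  obtain ⟨s, hs, hslope⟩ := exists_hasDerivAt_eq_slope f f' hax
    (hf.mono (Set.Icc_subset_Icc_right hx.2)) fun t ht ↦ hf' t ⟨ht.1, ht.2.trans_le hx.2⟩
  have hs_neg : f' s < 0 := hslope ▸ div_neg_of_neg_of_pos (by linarith) (by linarith)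
  have hanti : AntitoneOn f (Set.Icc x b) := by
    refine antitoneOn_of_hasDerivWithinAt_nonpos (f' := f') (convex_Icc x b)
      (hf.mono (Set.Icc_subset_Icc_left hx.1)) (fun t ht ↦ ?_) fun t ht ↦ ?_ <;>
      rw [interior_Icc] at ht
    · exact (hf' t ⟨hax.trans ht.1, ht.2⟩).hasDerivWithinAt
    · exact hsign s ⟨hs.1, hs.2.trans ht.1 |>.trans ht.2⟩ t ⟨hax.trans ht.1, ht.2⟩
        (hs.2.trans ht.1).le hs_neg
  linarith [hanti ⟨le_rfl, hx.2⟩ ⟨hx.2, le_rfl⟩ hx.2]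

lemma div_lt_inv_sqrt_iff {k u w : ℝ} (hk : 0 ≤ k) (hu : 0 < u) (hw : 0 < w) :
    k / u < (√w)⁻¹ ↔ k ^ 2 * w < u ^ 2 := by
  have hk_sqrt : k * √w = √(k ^ 2 * w) := by
    rw [Real.sqrt_mul (sq_nonneg k), Real.sqrt_sq hk]
  rw [← one_div, div_lt_div_iff₀ hu (Real.sqrt_pos.2 hw), one_mul, hk_sqrt, Real.sqrt_lt' hu]

lemma hasDerivAt_const_mul_log_one_add (k : ℝ) {t : ℝ} (ht : -1 < t) :
    HasDerivAt (fun s ↦ k * Real.log (1 + s)) (k / (1 + t)) t := by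
  simpa [div_eq_mul_inv] using
    (((hasDerivAt_id' t).const_add 1).log (ne_of_gt (by linarith))).const_mul k

lemma arcosh_one_add_sq_div_two {m : ℝ} (hm : 0 ≤ m) :
    Real.arcosh (1 + m ^ 2 / 2) = 2 * Real.arsinh (m / 2) := by
  have hcosh : Real.cosh (2 * Real.arsinh (m / 2)) = 1 + m ^ 2 / 2 := by
    rw [Real.cosh_two_mul, Real.cosh_sq, Real.sinh_arsinh]
    ring
  rw [← hcosh, Real.arcosh_cosh
    (mul_nonneg zero_le_two (Real.arsinh_nonneg_iff.2 (by positivity)))]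

lemma log_one_add_le_arcosh_one_add_mul_div_two_add_log_two {c c' : ℝ} (hc : 0 ≤ c)
    (hc' : 0 ≤ c') (h : c ≤ 1 + c * c') :
    Real.log (1 + c) ≤ Real.arcosh (1 + c * c' / 2) + Real.log 2 := by
  have hpos : 0 < 1 + c * c' / 2 := by positivity
  calc Real.log (1 + c) ≤ Real.log ((1 + c * c' / 2) * 2) :=
        Real.log_le_log (by positivity) (by linarith)
    _ = Real.log (1 + c * c' / 2) + Real.log 2 := Real.log_mul hpos.ne' two_ne_zero
    _ ≤ Real.arcosh (1 + c * c' / 2) + Real.log 2 := by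
        gcongr
        exact Real.log_le_log hpos (le_add_of_nonneg_right (Real.sqrt_nonneg _))

section ConstantBounds

local notation "κ" => Real.arcosh 3 / Real.log 3

lemma arcosh_three_div_log_three_mem_Ioo : κ ∈ Set.Ioo (3 / 2) 2 := by
  have hlog3 : 0 < Real.log 3 := Real.log_pos (by norm_num)
  have harcosh : Real.arcosh 3 = Real.log (3 + √8) := by norm_num [Real.arcosh]
  have hsqrt8 : √8 ^ 2 = 8 := Real.sq_sqrt (by norm_num)
  have hpos : 0 < 3 + √8 := by positivity
  have hsqrt8_gt : 5 / 3 < √8 := Real.lt_sqrt_of_sq_lt (by norm_num)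
  constructor
  · rw [lt_div_iff₀ hlog3, harcosh]
    have h := Real.log_lt_log (by norm_num) (show (3 : ℝ) ^ 3 < (3 + √8) ^ 2 by nlinarith)
    rw [Real.log_pow, Real.log_pow] at h
    push_cast at h
    linarith
  · rw [div_lt_iff₀ hlog3, harcosh]
    have h := Real.log_lt_log hpos (show 3 + √8 < (3 : ℝ) ^ 2 by nlinarith)
    rw [Real.log_pow] at h
    push_cast at h
    linarith

lemma arcosh_three_div_log_three_mul_log_three : κ * Real.log 3 = Real.arcosh 3 :=
  div_mul_cancel₀ _ (Real.log_pos (by norm_num)).ne'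

lemma arcosh_one_add_le_mul_log {m : ℝ} (hm : 2 ≤ m) :
    Real.arcosh (1 + m) ≤ κ * Real.log (1 + m) := by
  obtain ⟨hκ, -⟩ := arcosh_three_div_log_three_mem_Ioo
  set F : ℝ → ℝ := fun t ↦ κ * Real.log (1 + t) - Real.arcosh (1 + t)
  have hF' : ∀ t ∈ Set.Ici (2 : ℝ),
      HasDerivAt F (κ / (1 + t) - (√((1 + t) ^ 2 - 1))⁻¹) t := fun t ht ↦
    (hasDerivAt_const_mul_log_one_add κ (by linarith [ht.out])).sub <|
      (Real.hasDerivAt_arcosh (by simp only [Set.mem_Ioi]; linarith [ht.out])).comp_const_add 1 t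
  have hmono : MonotoneOn F (Set.Ici 2) := by
    refine monotoneOn_of_hasDerivWithinAt_nonneg (convex_Ici 2)
      (fun t ht ↦ (hF' t ht).continuousAt.continuousWithinAt)
      (fun t ht ↦ (hF' t (interior_subset ht)).hasDerivWithinAt) fun t ht ↦ ?_
    rw [interior_Ici, Set.mem_Ioi] at ht
    rw [sub_nonneg, ← not_lt, div_lt_inv_sqrt_iff (by linarith) (by linarith) (by nlinarith)]
    have hκ_sq : 9 / 4 < κ ^ 2 := by nlinarith
    have ht_sq : 9 < (1 + t) ^ 2 := by nlinarith
    nlinarith [mul_pos (by linarith : 0 < κ ^ 2 - 1) (by linarith : 0 < (1 + t) ^ 2 - 9)]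
  have hF2 : F 2 = 0 := by
    simp only [F]
    norm_num [arcosh_three_div_log_three_mul_log_three]
  linarith [hmono (Set.mem_Ici.2 le_rfl) (Set.mem_Ici.2 hm) hm]

lemma arcosh_one_add_sq_div_two_le_mul_log {m : ℝ} (h0 : 0 ≤ m) (h2 : m ≤ 2) :
    Real.arcosh (1 + m ^ 2 / 2) ≤ κ * Real.log (1 + m) := by
  obtain ⟨hκ, hκ'⟩ := arcosh_three_div_log_three_mem_Ioo
  set f : ℝ → ℝ := fun t ↦ κ * Real.log (1 + t) - 2 * Real.arsinh (t / 2)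
  set f' : ℝ → ℝ := fun t ↦ κ / (1 + t) - (√(1 + (t / 2) ^ 2))⁻¹
  have hf' : ∀ t ∈ Set.Icc (0 : ℝ) 2, HasDerivAt f (f' t) t := fun t ht ↦
    (hasDerivAt_const_mul_log_one_add κ (by linarith [ht.1])).sub <|
      (((hasDerivAt_id' t).div_const 2).arsinh.const_mul 2).congr_deriv (by ring)
  have hsign : ∀ s ∈ Set.Ioo (0 : ℝ) 2, ∀ t ∈ Set.Ioo (0 : ℝ) 2,
      s ≤ t → f' s < 0 → f' t ≤ 0 := by
    -- `f'` has the sign of `κ² (1 + t² / 4) - (1 + t)²`, which decreases in `t` since `κ < 2`.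
    intro s hs t ht hst hs_neg
    simp only [f', sub_nonpos, sub_neg] at hs_neg ⊢
    rw [div_lt_inv_sqrt_iff (by linarith) (by linarith [hs.1]) (by positivity)] at hs_neg
    refine le_of_lt ?_
    rw [div_lt_inv_sqrt_iff (by linarith) (by linarith [ht.1]) (by positivity)]
    have hκ_sq : κ ^ 2 < 4 := by nlinarith
    nlinarith [mul_nonneg (sub_nonneg.2 hst)
      (add_nonneg (mul_nonneg (sub_nonneg.2 hκ_sq.le) (add_nonneg hs.1.le ht.1.le)) zero_le_two)]
  have hf0 : f 0 = 0 := by simp [f]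
  have hf2 : f 2 = 0 := by
    simp only [f]
    rw [← arcosh_one_add_sq_div_two zero_le_two]
    norm_num [arcosh_three_div_log_three_mul_log_three]
  have := nonneg_of_deriv_neg_imp_nonpos
    (fun t ht ↦ (hf' t ht).continuousAt.continuousWithinAt)
    (fun t ht ↦ hf' t (Set.Ioo_subset_Icc_self ht)) hsign hf0.ge hf2.ge ⟨h0, h2⟩
  rw [arcosh_one_add_sq_div_two h0]
  linarith

lemma arcosh_one_add_mul_div_two_le {c c' : ℝ} (hc : 0 ≤ c) (hc' : 0 ≤ c')
    (h : c * c' ≤ c + c') :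
    Real.arcosh (1 + c * c' / 2) ≤ κ * Real.log (1 + max c c') := by
  set m := max c c'
  have hm : 0 ≤ m := hc.trans (le_max_left c c')
  rcases le_total m 2 with hm2 | hm2
  · calc Real.arcosh (1 + c * c' / 2) ≤ Real.arcosh (1 + m ^ 2 / 2) := by
          rw [Real.arcosh_le_arcosh (by positivity) (by positivity), sq]
          gcongr <;> [exact le_max_left c c'; exact le_max_right c c']
      _ ≤ κ * Real.log (1 + m) := arcosh_one_add_sq_div_two_le_mul_log hm hm2
  · calc Real.arcosh (1 + c * c' / 2) ≤ Real.arcosh (1 + m) := by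
          rw [Real.arcosh_le_arcosh (by positivity) (by positivity)]
          linarith [le_max_left c c', le_max_right c c']
      _ ≤ κ * Real.log (1 + m) := arcosh_one_add_le_mul_log hm2

lemma arcosh_one_add_crossRatio_mul_le {n : ℕ} (a b x y : OnePoint (En n)) :
    Real.arcosh (1 + crossRatio a x b y * crossRatio a y b x / 2) ≤
      κ * max (Real.log (1 + crossRatio a x b y)) (Real.log (1 + crossRatio b x a y)) := by
  have hκ : 0 ≤ κ := by linarith [arcosh_three_div_log_three_mem_Ioo.1]
  set c := crossRatio a x b y
  set c' := crossRatio a y b x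
  have hmax : Real.log (1 + max c c') ≤ max (Real.log (1 + c)) (Real.log (1 + c')) := by
    rcases max_choice c c' with h | h <;> rw [h]
    exacts [le_max_left _ _, le_max_right _ _]
  rw [crossRatio_swap]
  calc Real.arcosh (1 + c * c' / 2) ≤ κ * Real.log (1 + max c c') :=
        arcosh_one_add_mul_div_two_le (crossRatio_nonneg ..) (crossRatio_nonneg ..)
          (crossRatio_mul_le_add ..)
    _ ≤ κ * max (Real.log (1 + c)) (Real.log (1 + c')) := by gcongr

end ConstantBounds

lemma log_one_add_crossRatio_le {n : ℕ} (a b x y : OnePoint (En n)) :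
    Real.log (1 + crossRatio a x b y) ≤
      Real.arcosh (1 + crossRatio a x b y * crossRatio a y b x / 2) + Real.log 2 :=
  log_one_add_le_arcosh_one_add_mul_div_two_add_log_two (crossRatio_nonneg ..)
    (crossRatio_nonneg ..) (crossRatio_le_one_add_mul ..)

lemma arcosh_eq_real_arcosh : arcosh = Real.arcosh := rfl

theorem rho_le_const_mul_seittenranta_general (n : ℕ) (G : Set (OnePoint (En n)))
    (x y : OnePoint (En n)) :
    rho G x y ≤ (arcosh 3 / Real.log 3) * seittenranta G x y := by
  rw [rho, seittenranta, arcosh_eq_real_arcosh]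
  set S := {r : ℝ | ∃ a ∈ frontier G, ∃ b ∈ frontier G,
    r = Real.log (1 + crossRatio a x b y)}
  have hκ : 0 ≤ Real.arcosh 3 / Real.log 3 :=
    by linarith [arcosh_three_div_log_three_mem_Ioo.1]
  by_cases hS : BddAbove S
  · have hmem : ∀ a ∈ frontier G, ∀ b ∈ frontier G,
        Real.log (1 + crossRatio a x b y) ≤ sSup S :=
      fun a ha b hb ↦ le_csSup hS ⟨a, ha, b, hb, rfl⟩
    refine Real.sSup_le ?_ (mul_nonneg hκ (Real.sSup_nonneg ?_))
    · rintro _ ⟨a, ha, b, hb, rfl⟩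
      exact (arcosh_one_add_crossRatio_mul_le a b x y).trans
        (mul_le_mul_of_nonneg_left (max_le (hmem a ha b hb) (hmem b hb a ha)) hκ)
    · rintro _ ⟨a, -, b, -, rfl⟩
      exact Real.log_nonneg (by linarith [crossRatio_nonneg a x b y])
  · have hρ : ¬ BddAbove {r : ℝ | ∃ a ∈ frontier G, ∃ b ∈ frontier G,
        r = Real.arcosh (1 + crossRatio a x b y * crossRatio a y b x / 2)} := by
      rintro ⟨M, hM⟩
      refine hS ⟨M + Real.log 2, ?_⟩
      rintro _ ⟨a, ha, b, hb, rfl⟩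
      linarith [log_one_add_crossRatio_le a b x y, hM ⟨a, ha, b, hb, rfl⟩]
    rw [Real.sSup_of_not_bddAbove hρ, Real.sSup_of_not_bddAbove hS, mul_zero]

/-- ρ_G ≤ (arcosh 3 / log 3) · δ_G for any domain G ⊆ ℝ̄ⁿ with at least two boundary points. -/
theorem rho_le_const_mul_seittenranta (n : ℕ) (hn : 2 ≤ n) (G : Set (OnePoint (En n)))
    (hopen : IsOpen G) (hconn : IsConnected G) (hbdry : (frontier G).Nontrivial)
    (x y : OnePoint (En n)) (hx : x ∈ G) (hy : y ∈ G) :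
    rho G x y ≤ (arcosh 3 / Real.log 3) * seittenranta G x y :=
  rho_le_const_mul_seittenranta_general n G x y
end
end

section
/- For every real number t ≥ 1, arcosh(1 + (t + 1/t)²/2) ≤ (arcosh 3 / log 2) · log(1 + (t² + 1)/(t + 1)), with equality at t = 1. -/
noncomputable section

/-!
With `a = (t + 1/t)/2 ≥ 1` the left side is `arcosh (1 + 2a²) = 2 arsinh a`, and
`√(1 + a²) ≤ √2 a` gives `arsinh a ≤ arsinh 1 + log a`, where `2 arsinh 1 = arcosh 3`.
For `t ≥ 1` we have `a ≤ b/2` with `b = 1 + (t² + 1)/(t + 1)`, and the constant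
`arcosh 3 / log 2 = 2 log (1 + √2) / log 2` is at least `2`, so
`2 arsinh a ≤ arcosh 3 + 2 log (b/2) ≤ (arcosh 3 / log 2) (log 2 + log (b/2))`.
-/

open Real hiding arcosh

theorem arcosh_one_add_two_mul_sq {a : ℝ} (ha : 0 ≤ a) :
    arcosh (1 + 2 * a ^ 2) = 2 * arsinh a := by
  have hsqrt : √((1 + 2 * a ^ 2) ^ 2 - 1) = 2 * a * √(1 + a ^ 2) := by
    rw [show (1 + 2 * a ^ 2) ^ 2 - 1 = (2 * a) ^ 2 * (1 + a ^ 2) by ring,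
      sqrt_mul' _ (by positivity), sqrt_sq (by positivity)]
  have hsq : 1 + 2 * a ^ 2 + 2 * a * √(1 + a ^ 2) = (a + √(1 + a ^ 2)) ^ 2 := by
    linear_combination (-1 : ℝ) * sq_sqrt (show 0 ≤ 1 + a ^ 2 by positivity)
  rw [arcosh, hsqrt, hsq, log_pow, arsinh]
  norm_num

theorem arcosh_three : arcosh 3 = 2 * arsinh 1 := by
  have h := arcosh_one_add_two_mul_sq zero_le_one
  norm_num at h
  exact h

theorem arsinh_le_arsinh_one_add_log {a : ℝ} (ha : 1 ≤ a) :
    arsinh a ≤ arsinh 1 + log a := by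
  have hsqrt : √(1 + a ^ 2) ≤ √2 * a := by
    rw [← sqrt_sq (by linarith : 0 ≤ a), ← sqrt_mul zero_le_two, sqrt_sq (by linarith)]
    exact sqrt_le_sqrt (by nlinarith)
  rw [arsinh, arsinh, ← log_mul (by positivity) (by positivity)]
  norm_num
  exact log_le_log (by positivity) (by linarith)

theorem log_two_le_arsinh_one : log 2 ≤ arsinh 1 := by
  rw [arsinh]
  refine log_le_log two_pos ?_
  norm_num
  linarith [one_le_sqrt.mpr one_le_two]

theorem two_le_arcosh_three_div_log_two : 2 ≤ arcosh 3 / log 2 := by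
  rw [le_div_iff₀ (log_pos one_lt_two), arcosh_three]
  linarith [log_two_le_arsinh_one]

theorem add_inv_le_one_add_sq_add_one_div_add_one {t : ℝ} (ht : 1 ≤ t) :
    t + 1 / t ≤ 1 + (t ^ 2 + 1) / (t + 1) := by
  rw [← sub_nonneg]
  have key : 1 + (t ^ 2 + 1) / (t + 1) - (t + 1 / t) = (t - 1) / (t * (t + 1)) := by
    field_simp
    ring
  rw [key]
  exact div_nonneg (by linarith) (by positivity)

theorem arcosh_one_add_two_mul_sq_le_mul_log {a c : ℝ} (ha : 1 ≤ a) (hac : a ≤ c) :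
    arcosh (1 + 2 * a ^ 2) ≤ arcosh 3 / log 2 * log (2 * c) := by
  have hlog2 : log 2 ≠ 0 := (log_pos one_lt_two).ne'
  calc arcosh (1 + 2 * a ^ 2) = 2 * arsinh a := arcosh_one_add_two_mul_sq (by linarith)
    _ ≤ arcosh 3 + 2 * log c := by
        linarith [arsinh_le_arsinh_one_add_log ha, arcosh_three,
          log_le_log (by linarith) hac]
    _ ≤ arcosh 3 / log 2 * log 2 + arcosh 3 / log 2 * log c := by
        rw [div_mul_cancel₀ _ hlog2]
        nlinarith [two_le_arcosh_three_div_log_two, log_nonneg (ha.trans hac)]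
    _ = arcosh 3 / log 2 * log (2 * c) := by
        rw [log_mul two_ne_zero (by linarith)]
        ring

/-- For t ≥ 1, arcosh(1 + (t + 1/t)²/2) ≤ (arcosh 3 / log 2) · log(1 + (t² + 1)/(t + 1)),
with equality at t = 1. -/
theorem arcosh_antipodal_le_const_mul_log :
    (∀ t : ℝ, 1 ≤ t →
      arcosh (1 + (t + 1 / t) ^ 2 / 2) ≤
        (arcosh 3 / Real.log 2) * Real.log (1 + (t ^ 2 + 1) / (t + 1))) ∧
    arcosh (1 + ((1 : ℝ) + 1 / 1) ^ 2 / 2) =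
      (arcosh 3 / Real.log 2) * Real.log (1 + ((1 : ℝ) ^ 2 + 1) / (1 + 1)) := by
  refine ⟨fun t ht => ?_, by norm_num [div_mul_cancel₀ _ (log_pos one_lt_two).ne']⟩
  have hsum : 2 ≤ t + 1 / t := by
    have : (t - 1) ^ 2 / t = t + 1 / t - 2 := by field_simp; ring
    linarith [show 0 ≤ (t - 1) ^ 2 / t by positivity]
  have h := arcosh_one_add_two_mul_sq_le_mul_log (a := (t + 1 / t) / 2)
    (c := (1 + (t ^ 2 + 1) / (t + 1)) / 2) (by linarith)
    (by linarith [add_inv_le_one_add_sq_add_one_div_add_one ht])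
  convert h using 3 <;> ring

end
end

section
/- Let 0 < q ≤ p < ∞ and let x, y ≥ 0 be real numbers. Then log(1 + (x^p + y^p)^{1/p}) ≤ log(1 + (x^q + y^q)^{1/q}) ≤ 2^{1/q − 1/p} · log(1 + (x^p + y^p)^{1/p}). -/
/-!
Power means decrease in the exponent, and convexity of `t ↦ t ^ (p / q)` bounds the loss by the
factor `2 ^ (1 / q - 1 / p) ≥ 1`. Bernoulli's inequality `1 + c t ≤ (1 + t) ^ c` for `c ≥ 1` then
moves that factor outside the logarithm.
-/

namespace NNReal

theorem rpow_add_rpow_le_mul_rpow_add_rpow {p q : ℝ} (a b : ℝ≥0) (hp : 0 < p) (hpq : p ≤ q) :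
    (a ^ p + b ^ p) ^ (1 / p) ≤ 2 ^ (1 / p - 1 / q) * (a ^ q + b ^ q) ^ (1 / q) := by
  have hq : 0 < q := hp.trans_le hpq
  have hpow : ∀ c : ℝ≥0, (c ^ p) ^ (q / p) = c ^ q := fun c => by
    rw [← rpow_mul, mul_div_cancel₀ _ hp.ne']
  calc (a ^ p + b ^ p) ^ (1 / p) = ((a ^ p + b ^ p) ^ (q / p)) ^ (1 / q) := by
        rw [← rpow_mul]; congr 1; field_simp
    _ ≤ (2 ^ (q / p - 1) * (a ^ q + b ^ q)) ^ (1 / q) := by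
        gcongr
        simpa only [hpow] using
          rpow_add_le_mul_rpow_add_rpow (a ^ p) (b ^ p) ((one_le_div hp).2 hpq)
    _ = 2 ^ (1 / p - 1 / q) * (a ^ q + b ^ q) ^ (1 / q) := by
        rw [mul_rpow, ← rpow_mul]; congr 2; field_simp

end NNReal

namespace Real

theorem rpow_add_rpow_le_mul_rpow_add_rpow {p q a b : ℝ} (ha : 0 ≤ a) (hb : 0 ≤ b) (hp : 0 < p)
    (hpq : p ≤ q) :
    (a ^ p + b ^ p) ^ (1 / p) ≤ 2 ^ (1 / p - 1 / q) * (a ^ q + b ^ q) ^ (1 / q) := by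
  lift a to NNReal using ha
  lift b to NNReal using hb
  exact_mod_cast NNReal.rpow_add_rpow_le_mul_rpow_add_rpow a b hp hpq

theorem log_one_add_mul_le_mul_log_one_add {c t : ℝ} (hc : 1 ≤ c) (ht : 0 ≤ t) :
    log (1 + c * t) ≤ c * log (1 + t) := by
  rw [← log_rpow (by positivity)]
  exact log_le_log (by positivity) (one_add_mul_self_le_rpow_one_add (by linarith) hc)

end Real

/-- For 0 < q ≤ p < ∞ and x, y ≥ 0:
log(1 + (x^p + y^p)^(1/p)) ≤ log(1 + (x^q + y^q)^(1/q)) ≤ 2^(1/q − 1/p) · log(1 + (x^p + y^p)^(1/p)). -/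
theorem log_powerMean_le (p q x y : ℝ) (hq : 0 < q) (hqp : q ≤ p) (hx : 0 ≤ x) (hy : 0 ≤ y) :
    Real.log (1 + (x ^ p + y ^ p) ^ (1 / p)) ≤ Real.log (1 + (x ^ q + y ^ q) ^ (1 / q)) ∧
    Real.log (1 + (x ^ q + y ^ q) ^ (1 / q)) ≤
      (2 : ℝ) ^ (1 / q - 1 / p) * Real.log (1 + (x ^ p + y ^ p) ^ (1 / p)) := by
  have hmean_le : (x ^ p + y ^ p) ^ (1 / p) ≤ (x ^ q + y ^ q) ^ (1 / q) :=
    Real.rpow_add_rpow_le hx hy hq hqp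
  have hle_mul_mean :
      (x ^ q + y ^ q) ^ (1 / q) ≤ (2 : ℝ) ^ (1 / q - 1 / p) * (x ^ p + y ^ p) ^ (1 / p) :=
    Real.rpow_add_rpow_le_mul_rpow_add_rpow hx hy hq hqp
  have hone_le : (1 : ℝ) ≤ 2 ^ (1 / q - 1 / p) :=
    Real.one_le_rpow one_le_two (sub_nonneg.2 (one_div_le_one_div_of_le hq hqp))
  refine ⟨Real.log_le_log (by positivity) (by linarith), ?_⟩
  calc Real.log (1 + (x ^ q + y ^ q) ^ (1 / q))
      ≤ Real.log (1 + (2 : ℝ) ^ (1 / q - 1 / p) * (x ^ p + y ^ p) ^ (1 / p)) :=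
        Real.log_le_log (by positivity) (by linarith)
    _ ≤ (2 : ℝ) ^ (1 / q - 1 / p) * Real.log (1 + (x ^ p + y ^ p) ^ (1 / p)) :=
        Real.log_one_add_mul_le_mul_log_one_add hone_le (by positivity)
end
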